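/- arXiv:2510.06360 — 2 statements merged into one kernel-verified Lean document; each statement's English description precedes it below -/
import Mathlib

section
/- Consider the linear program: minimize v − u over β ∈ ℝ^m, u, v ∈ ℝ, subject to u ≤ (h^T β)_k ≤ v for all k ∈ [N] and α^T β = 1, where h ∈ ℝ^{m×N} and α ∈ ℝ^m. Its optimal value is at least 2/‖a‖₁ for every a ∈ ℝ^N satisfying h a = α and ∑_k a_k = 0 with a ≠ 0. -/
open Matrix

/-- Weak duality: any feasible point `(β, u, v)` of the seminorm-minimization LP has
objective `v - u` at least `2 / ‖a‖₁` for every `a` with `h a = α`, `∑ a = 0`, `a ≠ 0`. -/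
theorem stmt4 {m N : ℕ} (h : Matrix (Fin m) (Fin N) ℝ) (α : Fin m → ℝ)
    (β : Fin m → ℝ) (u v : ℝ)
    (hc : ∀ k, u ≤ h.transpose.mulVec β k ∧ h.transpose.mulVec β k ≤ v)
    (hβ : ∑ j, α j * β j = 1)
    (a : Fin N → ℝ) (haf : h.mulVec a = α) (hsum : ∑ k, a k = 0) (hne : a ≠ 0) :
    2 / (∑ k, |a k|) ≤ v - u := by
  set w : Fin N → ℝ := h.transpose.mulVec β with hw
  have hS : 0 < ∑ k, |a k| := by
    have : ∃ k, a k ≠ 0 := by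
      by_contra hcon
      push_neg at hcon
      exact hne (funext hcon)
    obtain ⟨k, hk⟩ := this
    apply Finset.sum_pos' (fun i _ => abs_nonneg _)
    exact ⟨k, Finset.mem_univ k, abs_pos.mpr hk⟩
  rw [div_le_iff₀ hS]
  -- key: ∑ a_k w_k = 1
  have key : ∑ k, a k * w k = 1 := by
    rw [← hβ]
    have : ∀ j, α j = ∑ k, h j k * a k := by
      intro j
      rw [← haf]
      simp [Matrix.mulVec, dotProduct]
    calc ∑ k, a k * w k = ∑ k, ∑ j, a k * (h j k * β j) := by
          apply Finset.sum_congr rfl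
          intro k _
          rw [hw, Matrix.mulVec, dotProduct, Finset.mul_sum]
          simp [Matrix.transpose_apply]
      _ = ∑ j, ∑ k, a k * (h j k * β j) := Finset.sum_comm
      _ = ∑ j, α j * β j := by
          apply Finset.sum_congr rfl
          intro j _
          rw [this j, Finset.sum_mul]
          apply Finset.sum_congr rfl
          intro k _
          ring
  have h2 : (2 : ℝ) = ∑ k, a k * (2 * w k - (u + v)) := by
    have : ∑ k, a k * (2 * w k - (u + v))
        = 2 * (∑ k, a k * w k) - (u + v) * ∑ k, a k := by
      rw [Finset.mul_sum, Finset.mul_sum, ← Finset.sum_sub_distrib]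
      apply Finset.sum_congr rfl
      intro k _
      ring
    rw [this, key, hsum]
    ring
  rw [h2]
  calc ∑ k, a k * (2 * w k - (u + v))
      ≤ ∑ k, |a k| * (v - u) := by
        apply Finset.sum_le_sum
        intro k _
        calc a k * (2 * w k - (u + v)) ≤ |a k * (2 * w k - (u + v))| := le_abs_self _
          _ = |a k| * |2 * w k - (u + v)| := abs_mul _ _
          _ ≤ |a k| * (v - u) := by
              apply mul_le_mul_of_nonneg_left _ (abs_nonneg _)
              rw [abs_le]
              constructor
              · have := (hc k).1; linarith
              · have := (hc k).2; linarith
    _ = (v - u) * ∑ k, |a k| := by rw [← Finset.sum_mul, mul_comm]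
end

section
/- Let g₁, ..., g_n be n independent commuting generators whose joint eigenvalue matrix h ∈ ℝ^{n×N} has columns ranging over all sign patterns in {−1,+1}^n (e.g., g_j = Z_j on n qubits). Then the optimal value of min { ‖a‖₁ : h a = α, ∑_k a_k = 0 } equals ‖α‖_∞. -/
open Matrix

private lemma sum_prod_bool {n : ℕ} (f : Fin n → Bool → ℝ) :
    ∑ x : Fin n → Bool, ∏ j, f j (x j) = ∏ j, (f j false + f j true) := by
  rw [← Fintype.piFinset_univ, Finset.sum_prod_piFinset]
  simp [Fintype.sum_bool, add_comm]

private lemma stmt9_lb {n : ℕ} (h : Matrix (Fin n) (Fin n → Bool) ℝ)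
    (hdef : ∀ j x, h j x = if x j then -1 else 1) (α : Fin n → ℝ)
    (a : (Fin n → Bool) → ℝ) (ha : h.mulVec a = α) :
    (⨆ j, |α j|) ≤ ∑ x, |a x| := by
  apply Real.iSup_le
  · intro j
    have : α j = ∑ x, h j x * a x := by
      rw [← ha]; rfl
    rw [this]
    calc |∑ x, h j x * a x| ≤ ∑ x, |h j x * a x| := Finset.abs_sum_le_sum_abs _ _
      _ = ∑ x, |a x| := by
          apply Finset.sum_congr rfl
          intro x _
          rw [abs_mul, hdef]
          by_cases hx : x j <;> simp [hx]
  · exact Finset.sum_nonneg fun x _ => abs_nonneg _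

/-- For `n` independent generators whose eigenvalue matrix has columns ranging over all
sign patterns (e.g. `g_j = Z_j`), the optimal value of
`min {‖a‖₁ : h a = α, ∑ a = 0}` equals `‖α‖_∞`. -/
theorem stmt9 {n : ℕ} (h : Matrix (Fin n) (Fin n → Bool) ℝ)
    (hdef : ∀ j x, h j x = if x j then -1 else 1) (α : Fin n → ℝ) :
    IsLeast {v : ℝ | ∃ a : (Fin n → Bool) → ℝ,
        h.mulVec a = α ∧ (∑ x, a x = 0) ∧ v = ∑ x, |a x|}
      (⨆ j, |α j|) := by
  constructor
  · -- membership
    rcases Nat.eq_zero_or_pos n with hn | hn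
    · subst hn
      refine ⟨0, ?_, by simp, ?_⟩
      · funext j; exact j.elim0
      · simp [Real.iSup_of_isEmpty]
    haveI : Nonempty (Fin n) := Fin.pos_iff_nonempty.mp hn
    set M : ℝ := ⨆ j, |α j| with hMdef
    have hab : ∀ j, |α j| ≤ M := fun j =>
      le_ciSup (f := fun j => |α j|) (Set.Finite.bddAbove (Set.finite_range _)) j
    have hM0 : 0 ≤ M := le_trans (abs_nonneg _) (hab (Classical.arbitrary _))
    rcases eq_or_lt_of_le hM0 with hM | hM
    · -- M = 0, so α = 0
      have hα : α = 0 := by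
        funext j
        have := hab j
        rw [← hM] at this
        exact abs_nonpos_iff.mp this
      refine ⟨0, by simp [hα], by simp, by simp [← hM]⟩
    · -- M > 0
      set t : Fin n → ℝ := fun j => α j / M with htdef
      have ht1 : ∀ j, |t j| ≤ 1 := by
        intro j
        rw [htdef, abs_div, abs_of_pos hM, div_le_one hM]
        exact hab j
      set p : Fin n → Bool → ℝ := fun j b => if b then (1 - t j)/2 else (1 + t j)/2
        with hpdef
      have hps : ∀ j, p j false + p j true = 1 := by intro j; simp [hpdef]; ring
      have hpnn : ∀ j b, 0 ≤ p j b := by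
        intro j b
        have h1 := abs_le.mp (ht1 j)
        cases b <;> simp [hpdef] <;> linarith [h1.1, h1.2]
      set μ : (Fin n → Bool) → ℝ := fun x => ∏ j, p j (x j) with hμdef
      have hμnn : ∀ x, 0 ≤ μ x := fun x => Finset.prod_nonneg fun j _ => hpnn j _
      have hμsum : ∑ x, μ x = 1 := by
        rw [hμdef, sum_prod_bool]
        simp [hps]
      -- marginal identity
      have hmarg : ∀ k, ∑ x : Fin n → Bool, (if x k then (-1:ℝ) else 1) * μ x = t k := by
        intro k
        set q : Fin n → Bool → ℝ :=
          fun j b => if j = k then (if b then -1 else 1) * p j b else p j b with hqdef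
        have hq : ∀ x : Fin n → Bool,
            (if x k then (-1:ℝ) else 1) * μ x = ∏ j, q j (x j) := by
          intro x
          simp only [hμdef]
          rw [← Finset.mul_prod_erase Finset.univ (fun j => q j (x j))
            (Finset.mem_univ k),
            ← Finset.mul_prod_erase Finset.univ (fun j => p j (x j))
            (Finset.mem_univ k), ← mul_assoc]
          have : ∀ j ∈ Finset.univ.erase k, q j (x j) = p j (x j) := by
            intro j hj
            simp [hqdef, Finset.ne_of_mem_erase hj]
          rw [Finset.prod_congr rfl this]
          simp [hqdef]
        calc ∑ x : Fin n → Bool, (if x k then (-1:ℝ) else 1) * μ x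
            = ∑ x : Fin n → Bool, ∏ j, q j (x j) := Finset.sum_congr rfl fun x _ => hq x
          _ = ∏ j, (q j false + q j true) := sum_prod_bool _
          _ = t k := by
              rw [Finset.prod_eq_single k]
              · simp [hqdef, hpdef]; ring
              · intro j _ hj
                simp [hqdef, hj, hps j]
              · simp
      -- flip involution
      have hinv : Function.Involutive (fun x : Fin n → Bool => fun j => ! x j) := by
        intro x; funext j; simp
      set e : Equiv.Perm (Fin n → Bool) := hinv.toPerm _ with hedef
      have hee : ∀ x, e (e x) = x := fun x => hinv x
      have he : ∀ x j, (e x) j = ! x j := fun x j => rfl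
      set a : (Fin n → Bool) → ℝ := fun x => (M/2) * (μ x - μ (e x)) with hadef
      have hsum0 : ∑ x, a x = 0 := by
        rw [hadef, ← Finset.mul_sum, Finset.sum_sub_distrib,
          Equiv.sum_comp e μ, sub_self, mul_zero]
      have hmul : h.mulVec a = α := by
        funext k
        rw [Matrix.mulVec, dotProduct]
        have step : ∀ x, h k x * a x
            = (M/2) * ((if x k then (-1:ℝ) else 1) * μ x)
              - (M/2) * ((if x k then (-1:ℝ) else 1) * μ (e x)) := by
          intro x
          rw [hdef, hadef]; ring
        rw [Finset.sum_congr rfl fun x _ => step x, Finset.sum_sub_distrib,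
          ← Finset.mul_sum, ← Finset.mul_sum]
        have hsecond : ∑ x : Fin n → Bool, (if x k then (-1:ℝ) else 1) * μ (e x)
            = - t k := by
          calc ∑ x : Fin n → Bool, (if x k then (-1:ℝ) else 1) * μ (e x)
              = ∑ x : Fin n → Bool, (if (e (e x)) k then (-1:ℝ) else 1) * μ (e x) := by
                apply Finset.sum_congr rfl; intro x _; rw [hee x]
            _ = ∑ y : Fin n → Bool, (if (e y) k then (-1:ℝ) else 1) * μ y :=
                Equiv.sum_comp e (fun y => (if (e y) k then (-1:ℝ) else 1) * μ y)
            _ = ∑ y : Fin n → Bool, -((if y k then (-1:ℝ) else 1) * μ y) := by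
                apply Finset.sum_congr rfl; intro y _
                rw [he]
                by_cases hy : y k <;> simp [hy]
            _ = - t k := by rw [Finset.sum_neg_distrib, hmarg k]
        rw [hmarg k, hsecond]
        field_simp [htdef]
        simp only [htdef]; field_simp
        ring
      refine ⟨a, hmul, hsum0, ?_⟩
      have hub : ∑ x, |a x| ≤ M := by
        calc ∑ x, |a x| ≤ ∑ x, (M/2) * (μ x + μ (e x)) := by
              apply Finset.sum_le_sum
              intro x _
              rw [hadef, abs_mul, abs_of_pos (by linarith : (0:ℝ) < M/2)]
              have h1 : |μ x - μ (e x)| ≤ μ x + μ (e x) := by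
                calc |μ x - μ (e x)| ≤ |μ x| + |μ (e x)| := abs_sub _ _
                  _ = μ x + μ (e x) := by
                      rw [abs_of_nonneg (hμnn x), abs_of_nonneg (hμnn (e x))]
              exact mul_le_mul_of_nonneg_left h1 (by linarith)
          _ = M := by
              rw [← Finset.mul_sum, Finset.sum_add_distrib, hμsum,
                Equiv.sum_comp e μ, hμsum]
              ring
      have hlb := stmt9_lb h hdef α a hmul
      exact (le_antisymm hlb hub).symm ▸ rfl
  · rintro v ⟨a, hmul, -, rfl⟩
    exact stmt9_lb h hdef α a hmul
end
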